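/- arXiv:1407.5743 — 2 statements merged into one kernel-verified Lean document; each statement's English description precedes it below -/
import Mathlib

section
/- Let X be a weakly collectionwise normal space, Y a topological space, (Z, γ, z*) a contractible space, (X_s)_{s∈S} a disjoint locally finite cover of X by functionally ambiguous sets, and for every s ∈ S let g_s : Y → Z be Baire-one. Then the mapping f : X × Y → Z defined by f(x,y) = g_s(y) whenever x ∈ X_s is Baire-one. -/
/-!
Write each `A s` as an increasing union of zero sets `F s n`. For fixed `n` the family
`(F s n)_s` is discrete, being locally finite, closed and disjoint, so weak collectionwise
normality gives a discrete family of cozero sets `U n s ⊇ F s n` and Urysohn functions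
`a n s`, equal to `1` on `F s n` and to `0` off `U n s`. The `n`-th approximant sends `(x, y)`
with `x ∈ U n s` to `γ (p s n y) (1 - a n s x)`, where `p s n → g s`, and everything else to
`z₀`; it is continuous by discreteness, and for `x ∈ A s` it eventually equals `p s n y`.
-/

open Set Function Filter Topology

universe u

/-- An *equiconnecting* map on `Z`: a map `λ : Z × Z × [0,1] → Z`, continuous on
`Z × Z × [0,1]`, with `λ(x,y,0) = x`, `λ(x,y,1) = y` and `λ(x,x,t) = x`. -/
structure IsEquiconnecting {Z : Type*} [TopologicalSpace Z] (lam : Z → Z → ℝ → Z) : Prop where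
  continuousOn : ContinuousOn (fun p : Z × Z × ℝ => lam p.1 p.2.1 p.2.2)
    (Set.univ ×ˢ Set.univ ×ˢ Set.Icc (0 : ℝ) 1)
  map_zero : ∀ x y : Z, lam x y 0 = x
  map_one : ∀ x y : Z, lam x y 1 = y
  map_diag : ∀ x : Z, ∀ t ∈ Set.Icc (0 : ℝ) 1, lam x x t = x

/-- `lambdaIter lam n` is the map `λ_{n+1} : Z^{n+1} × S_{n+1} → Z` from the paper,
defined recursively. -/
noncomputable def lambdaIter {Z : Type*} (lam : Z → Z → ℝ → Z) :
    (n : ℕ) → (Fin (n + 1) → Z) → (Fin (n + 1) → ℝ) → Z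
  | 0, x, _ => x 0
  | n + 1, x, a =>
      if 0 < a 0 + a 1 then
        lambdaIter lam n
          (Fin.cons (lam (x 0) (x 1) (a 1 / (a 0 + a 1))) fun i => x i.succ.succ)
          (Fin.cons (a 0 + a 1) fun i => a i.succ.succ)
      else
        lambdaIter lam n (fun i => x i.succ) fun i => a i.succ

/-- `lambdaIterSet lam A n` is the set `λ^n(A)`:  `λ^0(A) = A` and
`λ^{n+1}(A) = λ(λ^n(A) × A × [0,1])`. -/
def lambdaIterSet {Z : Type*} (lam : Z → Z → ℝ → Z) (A : Set Z) : ℕ → Set Z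
  | 0 => A
  | n + 1 => (fun p : Z × Z × ℝ => lam p.1 p.2.1 p.2.2) ''
      (lambdaIterSet lam A n ×ˢ A ×ˢ Set.Icc (0 : ℝ) 1)

/-- `λ^∞(A) = ⋃_{n ≥ 1} λ^n(A)`. -/
def lambdaInftySet {Z : Type*} (lam : Z → Z → ℝ → Z) (A : Set Z) : Set Z :=
  ⋃ n : ℕ, lambdaIterSet lam A (n + 1)

/-- An equiconnected space `(Z, λ)` is locally convex if every point has arbitrarily small
neighborhoods `V` with `λ^∞(V)` inside a given neighborhood. -/
def IsLocallyConvexEquiconnected {Z : Type*} [TopologicalSpace Z] (lam : Z → Z → ℝ → Z) :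
    Prop :=
  ∀ z : Z, ∀ U ∈ nhds z, ∃ V ∈ nhds z, lambdaInftySet lam V ⊆ U

/-- A map is Baire-one if it is the pointwise limit of a sequence of continuous maps. -/
def BaireOne {Y Z : Type*} [TopologicalSpace Y] [TopologicalSpace Z] (g : Y → Z) : Prop :=
  ∃ h : ℕ → Y → Z, (∀ n, Continuous (h n)) ∧
    ∀ y, Filter.Tendsto (fun n => h n y) Filter.atTop (nhds (g y))

/-- A locally finite partition of unity on `X`: continuous `[0,1]`-valued functions whose
supports (closures of the sets where they are nonzero) form a locally finite family and whose
pointwise sum is `1`. -/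
def IsLocFinPartitionOfUnity {I X : Type*} [TopologicalSpace X] (φ : I → X → ℝ) : Prop :=
  (∀ i, Continuous (φ i)) ∧ (∀ i x, φ i x ∈ Set.Icc (0 : ℝ) 1) ∧
    (LocallyFinite fun i => closure (Function.support (φ i))) ∧ ∀ x, ∑ᶠ i, φ i x = 1

/-- A strong PP-space: for every dense `D ⊆ X` there are a sequence of locally finite
partitions of unity and families of points of `D` such that points attached to the supports
containing `x` converge to `x` uniformly in the index, in the sense of condition (3). -/
def IsStrongPPSpace (X : Type*) [TopologicalSpace X] : Prop :=
  ∀ D : Set X, Dense D →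
    ∃ (I : ℕ → Type u) (φ : ∀ n, I n → X → ℝ) (p : ∀ n, I n → X),
      (∀ n, IsLocFinPartitionOfUnity (φ n)) ∧ (∀ n i, p n i ∈ D) ∧
      ∀ x : X, ∀ U ∈ nhds x, ∃ n₀ : ℕ, ∀ n ≥ n₀, ∀ i : I n,
        x ∈ closure (Function.support (φ n i)) → p n i ∈ U

/-- A zero set: the preimage of `{0}` under a continuous function `X → [0,1]`. -/
def IsZeroSet {X : Type*} [TopologicalSpace X] (A : Set X) : Prop :=
  ∃ f : X → ℝ, Continuous f ∧ (∀ x, f x ∈ Set.Icc (0 : ℝ) 1) ∧ A = f ⁻¹' {0}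

/-- A cozero set: the preimage of `(0,1]` under a continuous function `X → [0,1]`. -/
def IsCozeroSet {X : Type*} [TopologicalSpace X] (A : Set X) : Prop :=
  ∃ f : X → ℝ, Continuous f ∧ (∀ x, f x ∈ Set.Icc (0 : ℝ) 1) ∧ A = f ⁻¹' Set.Ioc (0 : ℝ) 1

/-- A functionally ambiguous set: simultaneously a countable union of zero sets and a
countable intersection of cozero sets. -/
def IsFunctionallyAmbiguous {X : Type*} [TopologicalSpace X] (A : Set X) : Prop :=
  (∃ F : ℕ → Set X, (∀ n, IsZeroSet (F n)) ∧ A = ⋃ n, F n) ∧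
    ∃ B : ℕ → Set X, (∀ n, IsCozeroSet (B n)) ∧ A = ⋂ n, B n

/-- A discrete family of sets: every point has a neighborhood meeting at most one member. -/
def IsDiscreteFamily {I X : Type*} [TopologicalSpace X] (A : I → Set X) : Prop :=
  ∀ x : X, ∃ U ∈ nhds x, {i : I | (U ∩ A i).Nonempty}.Subsingleton

/-- Weakly collectionwise normal: every discrete family of zero sets can be separated by a
discrete family of cozero sets. -/
def WeaklyCollectionwiseNormal (X : Type*) [TopologicalSpace X] : Prop :=
  ∀ (S : Type u) (F : S → Set X), (∀ s, IsZeroSet (F s)) → IsDiscreteFamily F →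
    ∃ U : S → Set X, (∀ s, IsCozeroSet (U s)) ∧ IsDiscreteFamily U ∧ ∀ s, F s ⊆ U s

/-- A contracting structure on `Z`: a continuous `γ : Z × [0,1] → Z` with `γ(z,0) = z` and
`γ(z,1) = z₀`. -/
structure IsContracting {Z : Type*} [TopologicalSpace Z] (γ : Z → ℝ → Z) (z₀ : Z) :
    Prop where
  continuousOn : ContinuousOn (fun p : Z × ℝ => γ p.1 p.2) (Set.univ ×ˢ Set.Icc (0 : ℝ) 1)
  map_zero : ∀ z : Z, γ z 0 = z
  map_one : ∀ z : Z, γ z 1 = z₀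

section ZeroSets

variable {X : Type*} [TopologicalSpace X]

theorem IsZeroSet.isClosed {F : Set X} (hF : IsZeroSet F) : IsClosed F := by
  obtain ⟨v, hv, -, rfl⟩ := hF
  exact isClosed_singleton.preimage hv

theorem IsZeroSet.union {F G : Set X} (hF : IsZeroSet F) (hG : IsZeroSet G) :
    IsZeroSet (F ∪ G) := by
  obtain ⟨v, hv, hv01, rfl⟩ := hF
  obtain ⟨w, hw, hw01, rfl⟩ := hG
  refine ⟨v * w, hv.mul hw, fun x => ?_, ?_⟩
  · exact ⟨mul_nonneg (hv01 x).1 (hw01 x).1, mul_le_one₀ (hv01 x).2 (hw01 x).1 (hw01 x).2⟩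
  · ext x
    simp [mul_eq_zero]

theorem IsZeroSet.accumulate {F : ℕ → Set X} (hF : ∀ n, IsZeroSet (F n)) (n : ℕ) :
    IsZeroSet (Set.accumulate F n) := by
  induction n with
  | zero => simpa only [Set.accumulate_zero_nat] using hF 0
  | succ n ih => simpa only [Set.accumulate_succ] using ih.union (hF (n + 1))

/-- Urysohn's lemma for a zero set inside a cozero set, with the explicit function `u / (u + v)`. -/
theorem exists_continuous_one_zero_of_isZeroSet_subset_isCozeroSet {F U : Set X}
    (hF : IsZeroSet F) (hU : IsCozeroSet U) (hFU : F ⊆ U) :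
    ∃ a : X → ℝ, Continuous a ∧ (∀ x, a x ∈ Icc (0 : ℝ) 1) ∧ EqOn a 1 F ∧ ∀ x ∉ U, a x = 0 := by
  obtain ⟨v, hv, hv01, rfl⟩ := hF
  obtain ⟨u, hu, hu01, rfl⟩ := hU
  have hden : ∀ x, 0 < u x + v x := by
    intro x
    rcases (hu01 x).1.eq_or_lt with hux | hux
    · have hvx : v x ≠ 0 := fun h => by simpa [← hux] using hFU (show x ∈ v ⁻¹' {0} from h)
      linarith [(hv01 x).1.lt_of_ne' hvx]
    · linarith [(hv01 x).1]
  refine ⟨fun x => u x / (u x + v x), hu.div (hu.add hv) fun x => (hden x).ne', fun x => ?_,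
    fun x hx => ?_, fun x hx => ?_⟩
  · exact ⟨div_nonneg (hu01 x).1 (hden x).le, (div_le_one (hden x)).2 (by linarith [(hv01 x).1])⟩
  · have hvx : v x = 0 := hx
    simpa [hvx] using (hFU hx).1.ne'
  · have hux : u x = 0 := by
      by_contra h
      exact hx ⟨(hu01 x).1.lt_of_ne' h, (hu01 x).2⟩
    simp [hux]

end ZeroSets

section Glue

variable {ι T W : Type*}

/-- The map equal to `φ i` on `U i` and to `c` outside `⋃ i, U i`; it is well defined when the
`U i` are pairwise disjoint. -/
noncomputable def glue (U : ι → Set T) (φ : ι → T → W) (c : W) (x : T) : W :=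
  haveI := Classical.propDecidable
  if h : ∃ i, x ∈ U i then φ h.choose x else c

theorem glue_eq_of_mem {U : ι → Set T} (hU : Pairwise (Disjoint on U)) (φ : ι → T → W) (c : W)
    {x : T} {i : ι} (hx : x ∈ U i) : glue U φ c x = φ i x := by
  have h : ∃ i, x ∈ U i := ⟨i, hx⟩
  rw [glue, dif_pos h, hU.eq (not_disjoint_iff.2 ⟨x, h.choose_spec, hx⟩)]

theorem glue_eq_of_forall_notMem {U : ι → Set T} (φ : ι → T → W) (c : W) {x : T}
    (hx : ∀ i, x ∉ U i) : glue U φ c x = c := by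
  rw [glue, dif_neg (not_exists.2 hx)]

end Glue

section DiscreteFamilies

variable {ι T : Type*} [TopologicalSpace T]

theorem LocallyFinite.isDiscreteFamily {F : ι → Set T} (hlf : LocallyFinite F)
    (hclosed : ∀ i, IsClosed (F i)) (hdisj : Pairwise (Disjoint on F)) : IsDiscreteFamily F := by
  refine fun x => ⟨_, hlf.iInter_compl_mem_nhds hclosed x, fun i ⟨_, hyi, hi⟩ j ⟨_, hyj, hj⟩ => ?_⟩
  have hxi : x ∈ F i := by_contra fun h => mem_iInter₂.1 hyi i h hi
  have hxj : x ∈ F j := by_contra fun h => mem_iInter₂.1 hyj j h hj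
  exact hdisj.eq (not_disjoint_iff.2 ⟨x, hxi, hxj⟩)

theorem IsDiscreteFamily.pairwise_disjoint {U : ι → Set T} (hU : IsDiscreteFamily U) :
    Pairwise (Disjoint on U) := by
  refine fun i j hij => disjoint_left.2 fun x hi hj => hij ?_
  obtain ⟨V, hV, hsub⟩ := hU x
  exact hsub ⟨x, mem_of_mem_nhds hV, hi⟩ ⟨x, mem_of_mem_nhds hV, hj⟩

theorem IsDiscreteFamily.preimage {T' : Type*} [TopologicalSpace T'] {U : ι → Set T}
    (hU : IsDiscreteFamily U) {π : T' → T} (hπ : Continuous π) :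
    IsDiscreteFamily fun i => π ⁻¹' U i := by
  intro x
  obtain ⟨V, hV, hsub⟩ := hU (π x)
  exact ⟨π ⁻¹' V, hπ.continuousAt hV, fun i ⟨y, hyV, hyi⟩ j ⟨z, hzV, hzj⟩ =>
    hsub ⟨π y, hyV, hyi⟩ ⟨π z, hzV, hzj⟩⟩

theorem IsDiscreteFamily.continuous_glue {W : Type*} [TopologicalSpace W] {U : ι → Set T}
    (hU : IsDiscreteFamily U) {φ : ι → T → W} {c : W} (hφ : ∀ i, Continuous (φ i))
    (hc : ∀ i, ∀ x ∉ U i, φ i x = c) : Continuous (glue U φ c) := by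
  refine continuous_iff_continuousAt.2 fun x₀ => ?_
  obtain ⟨V, hV, hsub⟩ := hU x₀
  by_cases hmeet : ∃ i, (V ∩ U i).Nonempty
  · obtain ⟨i, hi⟩ := hmeet
    refine (hφ i).continuousAt.congr (eventuallyEq_of_mem hV fun x hxV => ?_)
    by_cases hx : ∃ j, x ∈ U j
    · obtain ⟨j, hxj⟩ := hx
      rw [glue_eq_of_mem hU.pairwise_disjoint φ c hxj, hsub ⟨x, hxV, hxj⟩ hi]
    · rw [glue_eq_of_forall_notMem φ c (not_exists.1 hx), hc i x fun h => hx ⟨i, h⟩]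
  · refine (continuousAt_const (y := c)).congr (eventuallyEq_of_mem hV fun x hxV => ?_)
    exact (glue_eq_of_forall_notMem φ c fun i hxi => hmeet ⟨i, x, hxV, hxi⟩).symm

end DiscreteFamilies

theorem WeaklyCollectionwiseNormal.exists_bumps {X : Type*} [TopologicalSpace X] {S : Type u}
    (hX : WeaklyCollectionwiseNormal.{u} X) {F : S → Set X} (hF : ∀ s, IsZeroSet (F s))
    (hF_disc : IsDiscreteFamily F) :
    ∃ (U : S → Set X) (a : S → X → ℝ), IsDiscreteFamily U ∧ (∀ s, F s ⊆ U s) ∧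
      (∀ s, Continuous (a s)) ∧ (∀ s x, a s x ∈ Icc (0 : ℝ) 1) ∧ (∀ s, EqOn (a s) 1 (F s)) ∧
      ∀ s, ∀ x ∉ U s, a s x = 0 := by
  obtain ⟨U, hU_coz, hU_disc, hFU⟩ := hX S F hF hF_disc
  choose a ha_cont ha01 ha_one ha_zero using fun s =>
    exists_continuous_one_zero_of_isZeroSet_subset_isCozeroSet (hF s) (hU_coz s) (hFU s)
  exact ⟨U, a, hU_disc, hFU, ha_cont, ha01, ha_one, ha_zero⟩

section Contracting

variable {X Y Z S : Type*} [TopologicalSpace X] [TopologicalSpace Y] [TopologicalSpace Z]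
  {γ : Z → ℝ → Z} {z₀ : Z}

/-- The pieces fit together because each one is `γ (p s y) 1 = z₀` wherever `a s` vanishes,
in particular off `U s × Y`. -/
theorem IsContracting.continuous_glue_prod (hγ : IsContracting γ z₀) {U : S → Set X}
    (hU : IsDiscreteFamily U) {a : S → X → ℝ} (ha_cont : ∀ s, Continuous (a s))
    (ha01 : ∀ s x, a s x ∈ Icc (0 : ℝ) 1) (ha_zero : ∀ s, ∀ x ∉ U s, a s x = 0)
    {p : S → Y → Z} (hp : ∀ s, Continuous (p s)) :
    Continuous (glue (fun s => Prod.fst ⁻¹' U s) (fun s q => γ (p s q.2) (1 - a s q.1)) z₀) := by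
  refine (hU.preimage continuous_fst).continuous_glue (fun s => ?_) fun s q hq => ?_
  · have ht : Continuous fun q : X × Y => 1 - a s q.1 :=
      continuous_const.sub ((ha_cont s).comp continuous_fst)
    refine hγ.continuousOn.comp_continuous (((hp s).comp continuous_snd).prodMk ht) fun q => ?_
    exact ⟨mem_univ _, sub_nonneg.2 (ha01 s q.1).2, sub_le_self _ (ha01 s q.1).1⟩
  · simp only [ha_zero s q.1 hq, sub_zero, hγ.map_one]

end Contracting

/-- Let `X` be weakly collectionwise normal, `(Z, γ, z₀)` a contractible space,
`(X_s)_{s ∈ S}` a disjoint locally finite cover of `X` by functionally ambiguous sets and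
`g_s : Y → Z` Baire-one for each `s`.  Then the map `f` with `f(x,y) = g_s(y)` for `x ∈ X_s`
is Baire-one. -/
theorem baireOne_of_ambiguous_cover {X Y Z : Type*} {S : Type u} [TopologicalSpace X]
    [TopologicalSpace Y] [TopologicalSpace Z]
    (hX : WeaklyCollectionwiseNormal.{u} X)
    (γ : Z → ℝ → Z) (z₀ : Z) (hγ : IsContracting γ z₀)
    (A : S → Set X) (hcover : ⋃ s, A s = Set.univ)
    (hdisj : Pairwise (Function.onFun Disjoint A)) (hlf : LocallyFinite A)
    (hamb : ∀ s, IsFunctionallyAmbiguous (A s))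
    (g : S → Y → Z) (hg : ∀ s, BaireOne (g s))
    (f : X × Y → Z) (hf : ∀ (s : S), ∀ x ∈ A s, ∀ y : Y, f (x, y) = g s y) :
    BaireOne f := by
  choose p hp_cont hp_lim using hg
  choose G hG_zero hG_union using fun s => (hamb s).1
  set F : S → ℕ → Set X := fun s => accumulate (G s)
  have hF_zero : ∀ s n, IsZeroSet (F s n) := fun s => IsZeroSet.accumulate (hG_zero s)
  have hFA : ∀ s n, F s n ⊆ A s := fun s n => (hG_union s).symm ▸ accumulate_subset_iUnion n
  have hF_disc : ∀ n, IsDiscreteFamily fun s => F s n := fun n =>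
    (hlf.subset fun s => hFA s n).isDiscreteFamily (fun s => (hF_zero s n).isClosed)
      fun s t hst => (hdisj hst).mono (hFA s n) (hFA t n)
  choose U a hU_disc hFU ha_cont ha01 ha_one ha_zero using fun n =>
    hX.exists_bumps (fun s => hF_zero s n) (hF_disc n)
  refine ⟨fun n => glue (fun s => Prod.fst ⁻¹' U n s) (fun s q => γ (p s n q.2) (1 - a n s q.1)) z₀,
    fun n => hγ.continuous_glue_prod (hU_disc n) (ha_cont n) (ha01 n) (ha_zero n) (hp_cont · n),
    fun ⟨x, y⟩ => ?_⟩
  obtain ⟨s, hxs⟩ := mem_iUnion.1 (hcover ▸ mem_univ x)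
  obtain ⟨N, hxN⟩ : ∃ N, x ∈ F s N := mem_iUnion.1 (by rwa [iUnion_accumulate, ← hG_union s])
  rw [hf s x hxs y]
  refine (hp_lim s y).congr' (eventually_atTop.2 ⟨N, fun n hn => ?_⟩)
  have hxn : x ∈ F s n := monotone_accumulate hn hxN
  dsimp only
  rw [glue_eq_of_mem ((hU_disc n).preimage continuous_fst).pairwise_disjoint _ _
    (show (x, y) ∈ _ from hFU n s hxn), ha_one n s hxn, Pi.one_apply, sub_self, hγ.map_zero]
end

section
/- Let X be a strong PP-space, Y a topological space and (Z, γ, z*) a contractible space. Let f : X × Y → Z be such that the map x ↦ f(x,y) is continuous for every y ∈ Y and the set {x ∈ X : the map y ↦ f(x,y) is Baire-one} is dense in X. Then f is the pointwise limit of a sequence of Baire-one maps X × Y → Z (i.e. f belongs to the second Baire class, so (X, Y, Z) is a Rudin 1-triple). -/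
open Set Function Filter Topology

universe u

/-!
Feed the dense set of points with Baire-one sections to the strong PP-property. For the `n`-th
partition of unity, well-order its index set and let `g n (x, y) = f (p i, y)`, where `i` is the
first index with `φ i x ≠ 0`; the strong PP-condition makes `p i → x`, so continuity of `f` in
`x` gives `g n → f` pointwise. Each `g n` is Baire-one: if `hᵢ m → f (p i, ·)` are continuous,
then with continuous bumps `wᵢ m` that have pairwise disjoint positivity sets and satisfy
`wᵢ m x = 1` for large `m` whenever `i` is the first index at `x`, the maps `γ (hᵢ m y) (1 - wᵢ m x)` glue (with the value
`z₀` off all bumps) to a continuous map, and these converge to `g n`.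
-/

theorem IsContracting.continuous_comp {T Z : Type*} [TopologicalSpace T] [TopologicalSpace Z]
    {γ : Z → ℝ → Z} {z₀ : Z} (hγ : IsContracting γ z₀) {u : T → Z} {t : T → ℝ}
    (hu : Continuous u) (ht : Continuous t) (ht01 : ∀ x, t x ∈ Icc (0 : ℝ) 1) :
    Continuous fun x => γ (u x) (t x) :=
  hγ.continuousOn.comp_continuous (hu.prodMk ht) fun x => ⟨mem_univ _, ht01 x⟩

theorem exists_continuous_eqOn_of_pairwise_disjoint_isOpen {ι T Z : Type*} [TopologicalSpace T]
    [TopologicalSpace Z] {S : ι → Set T} (hSo : ∀ i, IsOpen (S i)) (hSlf : LocallyFinite S)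
    (hSd : Pairwise (Disjoint on S)) {ψ : ι → T → Z} (hψ : ∀ i, Continuous (ψ i)) (z₀ : Z)
    (hψz : ∀ i, EqOn (ψ i) (fun _ => z₀) (S i)ᶜ) :
    ∃ H : T → Z, Continuous H ∧ ∀ i, EqOn H (ψ i) (S i) := by
  classical
  set H : T → Z := fun t => if h : ∃ i, t ∈ S i then ψ h.choose t else z₀
  have hH : ∀ i, EqOn H (ψ i) (closure (S i)) := by
    intro i t ht
    by_cases h : ∃ j, t ∈ S j
    · have hi : h.choose = i := by
        by_contra hne
        exact disjoint_left.1 ((hSd hne).closure_right (hSo _)) h.choose_spec ht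
      simp only [H, dif_pos h, hi]
    · simp only [H, dif_neg h]
      exact (hψz i fun hti => h ⟨i, hti⟩).symm
  have hH₀ : EqOn H (fun _ => z₀) (⋃ i, S i)ᶜ := fun t ht => dif_neg (by simpa using ht)
  refine ⟨H, (hSlf.closure.option_elim' (⋃ i, S i)ᶜ).continuous ?_ ?_ ?_,
    fun i => (hH i).mono subset_closure⟩
  · refine eq_univ_of_forall fun t => ?_
    by_cases h : t ∈ ⋃ i, S i
    · obtain ⟨i, hi⟩ := mem_iUnion.1 h
      exact mem_iUnion.2 ⟨some i, subset_closure hi⟩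
    · exact mem_iUnion.2 ⟨none, h⟩
  · rintro (_ | i)
    · exact (isOpen_iUnion hSo).isClosed_compl
    · exact isClosed_closure
  · rintro (_ | i)
    · exact continuousOn_const.congr hH₀
    · exact (hψ i).continuousOn.congr (hH i)

open Classical in
noncomputable def sumBelow {I X : Type*} (r : I → I → Prop) (φ : I → X → ℝ) (i : I) (x : X) :
    ℝ :=
  ∑ᶠ j, if r j i then φ j x else 0

/-- Positivity forces `m φᵢ > 1` and `m Σ_{j<i} φⱼ < 1`; as `φⱼ ≤ Σ_{k<i} φₖ` for `j < i`, two
comparable indices never have positive bumps at the same point. -/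
noncomputable def disjointBump {I X : Type*} (r : I → I → Prop) (φ : I → X → ℝ) (m : ℕ) (i : I)
    (x : X) : ℝ :=
  max 0 (min (m * φ i x - 1) 1 - m * sumBelow r φ i x)

theorem sumBelow_eq_zero {I X : Type*} {r : I → I → Prop} {φ : I → X → ℝ} {i : I} {x : X}
    (h : ∀ j, r j i → φ j x = 0) : sumBelow r φ i x = 0 :=
  finsum_eq_zero_of_forall_eq_zero fun j => by split_ifs with hj <;> simp [h j, *]

theorem mul_sumBelow_lt_one_of_disjointBump_pos {I X : Type*} {r : I → I → Prop}
    {φ : I → X → ℝ} {m : ℕ} {i : I} {x : X}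
    (h : 0 < disjointBump r φ m i x) : m * sumBelow r φ i x < 1 := by
  have := min_le_right ((m : ℝ) * φ i x - 1) 1
  rcases lt_max_iff.1 h with h | h <;> linarith

namespace IsLocFinPartitionOfUnity

variable {I X : Type*} [TopologicalSpace X] {φ : I → X → ℝ}

theorem finite_ne_zero (hφ : IsLocFinPartitionOfUnity φ) (x : X) : {i | φ i x ≠ 0}.Finite :=
  (hφ.2.2.1.point_finite x).subset fun _ hi => subset_closure (mem_support.2 hi)

theorem exists_ne_zero (hφ : IsLocFinPartitionOfUnity φ) (x : X) : ∃ i, φ i x ≠ 0 := by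
  by_contra! h
  simpa [finsum_eq_zero_of_forall_eq_zero h] using hφ.2.2.2 x

theorem exists_ne_zero_forall_lt (hφ : IsLocFinPartitionOfUnity φ) (r : I → I → Prop)
    [IsWellFounded I r] (x : X) : ∃ i, φ i x ≠ 0 ∧ ∀ j, r j i → φ j x = 0 := by
  obtain ⟨i, hi, hmin⟩ :=
    (IsWellFounded.wf : WellFounded r).has_min {i | φ i x ≠ 0} (hφ.exists_ne_zero x)
  exact ⟨i, hi, fun j hj => by_contra fun h => hmin j h hj⟩

variable (hφ : IsLocFinPartitionOfUnity φ) (r : I → I → Prop)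
include hφ

theorem continuous_sumBelow (i : I) : Continuous (sumBelow r φ i) := by
  classical
  refine continuous_finsum (fun j => ?_) (hφ.2.2.1.subset fun j => ?_)
  · split_ifs
    exacts [hφ.1 j, continuous_const]
  · refine subset_trans (fun x hx => ?_) subset_closure
    split_ifs at hx
    exacts [hx, absurd rfl hx]

theorem sumBelow_nonneg (i : I) (x : X) : 0 ≤ sumBelow r φ i x :=
  finsum_nonneg fun j => by split_ifs; exacts [(hφ.2.1 j x).1, le_rfl]

theorem le_sumBelow {i j : I} (hji : r j i) (x : X) : φ j x ≤ sumBelow r φ i x := by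
  classical
  have hfin : (support fun j' => if r j' i then φ j' x else 0).Finite :=
    (hφ.finite_ne_zero x).subset fun j' hj' => by
      rw [mem_support] at hj'
      split_ifs at hj'
      exacts [hj', absurd rfl hj']
  simpa [sumBelow, hji] using single_le_finsum j hfin
    fun j' => by split_ifs; exacts [(hφ.2.1 j' x).1, le_rfl]

theorem continuous_disjointBump (m : ℕ) (i : I) : Continuous (disjointBump r φ m i) :=
  continuous_const.max ((((continuous_const.mul (hφ.1 i)).sub continuous_const).min
    continuous_const).sub (continuous_const.mul (hφ.continuous_sumBelow r i)))

theorem disjointBump_mem_Icc (m : ℕ) (i : I) (x : X) : disjointBump r φ m i x ∈ Icc (0 : ℝ) 1 :=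
  ⟨le_max_left _ _, max_le zero_le_one <| by
    have := mul_nonneg m.cast_nonneg (hφ.sumBelow_nonneg r i x)
    linarith [min_le_right ((m : ℝ) * φ i x - 1) 1]⟩

theorem one_lt_mul_of_disjointBump_pos {m : ℕ} {i : I} {x : X}
    (h : 0 < disjointBump r φ m i x) : 1 < m * φ i x := by
  have := mul_nonneg m.cast_nonneg (hφ.sumBelow_nonneg r i x)
  have := min_le_left ((m : ℝ) * φ i x - 1) 1
  rcases lt_max_iff.1 h with h | h <;> linarith

theorem eq_of_disjointBump_pos [Std.Trichotomous r] {m : ℕ} {i j : I} {x : X}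
    (hi : 0 < disjointBump r φ m i x) (hj : 0 < disjointBump r φ m j x) : i = j := by
  have not_rel : ∀ {i j}, 0 < disjointBump r φ m i x → 0 < disjointBump r φ m j x → ¬r i j :=
    fun hi hj hij => by
      have := mul_le_mul_of_nonneg_left (hφ.le_sumBelow r hij x) m.cast_nonneg
      linarith [hφ.one_lt_mul_of_disjointBump_pos r hi,
        mul_sumBelow_lt_one_of_disjointBump_pos hj]
  exact Std.Trichotomous.trichotomous (r := r) i j (not_rel hi hj) (not_rel hj hi)

theorem locallyFinite_disjointBump_pos (m : ℕ) :
    LocallyFinite fun i => {x | 0 < disjointBump r φ m i x} :=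
  hφ.2.2.1.subset fun i x hx => subset_closure fun h0 => by
    linarith [h0 ▸ hφ.one_lt_mul_of_disjointBump_pos r hx]

theorem eventually_disjointBump_eq_one {i : I} {x : X} (hi : φ i x ≠ 0)
    (hmin : ∀ j, r j i → φ j x = 0) : ∀ᶠ m : ℕ in atTop, disjointBump r φ m i x = 1 := by
  have hpos : 0 < φ i x := (hφ.2.1 i x).1.lt_of_ne' hi
  filter_upwards [(tendsto_natCast_atTop_atTop.atTop_mul_const hpos).eventually_ge_atTop 2]
    with m hm
  rw [disjointBump, sumBelow_eq_zero hmin, mul_zero, sub_zero, min_eq_right (by linarith),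
    max_eq_right zero_le_one]

theorem baireOne_of_sections_eq_at_first_index {Y Z : Type*} [TopologicalSpace Y]
    [TopologicalSpace Z] {γ : Z → ℝ → Z} {z₀ : Z} (hγ : IsContracting γ z₀) [Std.Trichotomous r]
    {F : I → Y → Z} (hF : ∀ i, BaireOne (F i)) {G : X × Y → Z}
    (hG : ∀ x, ∃ i, φ i x ≠ 0 ∧ (∀ j, r j i → φ j x = 0) ∧ ∀ y, G (x, y) = F i y) :
    BaireOne G := by
  choose h hc hlim using hF
  have hbump := hφ.disjointBump_mem_Icc r
  have glued : ∀ m : ℕ, ∃ H : X × Y → Z, Continuous H ∧ ∀ i,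
      EqOn H (fun q => γ (h i m q.2) (1 - disjointBump r φ m i q.1))
        {q | 0 < disjointBump r φ m i q.1} := fun m =>
    exists_continuous_eqOn_of_pairwise_disjoint_isOpen
      (fun i => isOpen_lt continuous_const
        ((hφ.continuous_disjointBump r m i).comp continuous_fst))
      ((hφ.locallyFinite_disjointBump_pos r m).preimage_continuous continuous_fst)
      (fun i j hij => disjoint_left.2 fun q hi hj => hij (hφ.eq_of_disjointBump_pos r hi hj))
      (fun i => hγ.continuous_comp ((hc i m).comp continuous_snd)
        (continuous_const.sub ((hφ.continuous_disjointBump r m i).comp continuous_fst))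
        fun q => ⟨by linarith [(hbump m i q.1).2], by linarith [(hbump m i q.1).1]⟩)
      z₀ fun i q hq => by
        have hq : ¬0 < disjointBump r φ m i q.1 := hq
        simp only [le_antisymm (not_lt.1 hq) (hbump m i q.1).1, sub_zero, hγ.map_one]
  choose H hHc hH using glued
  refine ⟨H, hHc, fun ⟨x, y⟩ => ?_⟩
  obtain ⟨i, hi, hmin, hGx⟩ := hG x
  rw [hGx]
  refine (hlim i y).congr' ?_
  filter_upwards [hφ.eventually_disjointBump_eq_one r hi hmin] with m hm
  symm
  rw [hH m i (show 0 < disjointBump r φ m i x from hm ▸ one_pos)]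
  simp only [hm, sub_self, hγ.map_zero]

end IsLocFinPartitionOfUnity

/-- If `X` is a strong PP-space, `Y` a topological space and `(Z, γ, z₀)` a
contractible space, then every `f : X × Y → Z` which is continuous in the first variable and
has Baire-one `y`-sections for a dense set of `x`'s is a pointwise limit of a sequence of
Baire-one maps (hence of the second Baire class), i.e. `(X, Y, Z)` is a Rudin `1`-triple. -/
theorem rudin_one_triple_of_strongPP_contractible {X Y Z : Type*} [TopologicalSpace X]
    [TopologicalSpace Y] [TopologicalSpace Z] (hX : IsStrongPPSpace.{u} X)
    (γ : Z → ℝ → Z) (z₀ : Z) (hγ : IsContracting γ z₀)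
    (f : X × Y → Z)
    (hsep : ∀ y : Y, Continuous fun x => f (x, y))
    (hdense : Dense {x : X | BaireOne fun y => f (x, y)}) :
    ∃ g : ℕ → X × Y → Z, (∀ n, BaireOne (g n)) ∧
      ∀ q : X × Y, Filter.Tendsto (fun n => g n q) Filter.atTop (nhds (f q)) := by
  obtain ⟨I, φ, p, hφ, hpD, hp⟩ := hX _ hdense
  choose idx hidx using fun n x => (hφ n).exists_ne_zero_forall_lt WellOrderingRel x
  refine ⟨fun n q => f (p n (idx n q.1), q.2), fun n => ?_, fun ⟨x, y⟩ => ?_⟩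
  · exact (hφ n).baireOne_of_sections_eq_at_first_index WellOrderingRel hγ (hpD n)
      fun x => ⟨idx n x, (hidx n x).1, (hidx n x).2, fun y => rfl⟩
  · have hpx : Tendsto (fun n => p n (idx n x)) atTop (𝓝 x) := fun U hU => by
      obtain ⟨n₀, hn₀⟩ := hp x U hU
      exact eventually_atTop.2 ⟨n₀, fun n hn => hn₀ n hn _ (subset_closure (hidx n x).1)⟩
    exact ((hsep y).tendsto x).comp hpx
end
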